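/- arXiv:0805.4220 — 3 statements merged into one kernel-verified Lean document; each statement's English description precedes it below -/
import Mathlib

section
/- For any tensor T ∈ F^{m1×m2×m3}, the minimization problem min over rank-at-most-1 tensors X of ‖T−X‖ attains its minimum, i.e., there exists a rank-at-most-1 tensor X* with ‖T−X*‖ = inf over all rank-at-most-1 tensors X of ‖T−X‖. -/
/-!
A rank-one tensor `u ⊗ v ⊗ w` can be rescaled to `(u / ‖u‖) ⊗ (v / ‖v‖) ⊗ (‖u‖ ‖v‖ w)` (sup norms),
whose last factor is bounded by the norm of the tensor. So the rank-one tensors of norm `≤ R`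
lie in the continuous image of a compact box of factors, and that image consists of rank-one
tensors. Minimizing `‖T - ·‖` over the image for `R = 2‖T‖` gives a global minimizer: a rank-one
tensor outside `closedBall T ‖T‖` is farther from `T` than the rank-one tensor `0`.
-/

open Metric

theorem exists_isMinOn_dist_of_isCompact {α : Type*} [PseudoMetricSpace α] {S C : Set α}
    (x : α) {y₀ : α} (hy₀ : y₀ ∈ S) (hC : IsCompact C)
    (hSC : S ∩ closedBall x (dist x y₀) ⊆ C) (hCS : C ⊆ S) :
    ∃ y ∈ S, IsMinOn (dist x) S y := by
  obtain ⟨y, hyC, hy⟩ := hC.exists_isMinOn ⟨y₀, hSC ⟨hy₀, mem_closedBall'.2 le_rfl⟩⟩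
    (continuous_const.dist continuous_id).continuousOn
  refine ⟨y, hCS hyC, fun z hz => ?_⟩
  by_cases hzx : dist x z ≤ dist x y₀
  · exact hy (hSC ⟨hz, by rwa [mem_closedBall, dist_comm]⟩)
  · calc dist x y ≤ dist x y₀ := hy (hSC ⟨hy₀, mem_closedBall'.2 le_rfl⟩)
      _ ≤ dist x z := (not_le.mp hzx).le

section RankOne

variable {𝕜 : Type*} [RCLike 𝕜] {ι₁ ι₂ ι₃ : Type*}

variable (𝕜 ι₁ ι₂ ι₃) in
def rankOneTensors : Set (EuclideanSpace 𝕜 (ι₁ × ι₂ × ι₃)) :=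
  {Y | ∃ (u : ι₁ → 𝕜) (v : ι₂ → 𝕜) (w : ι₃ → 𝕜), ∀ i j k, Y (i, j, k) = u i * v j * w k}

def rankOneTensor (u : ι₁ → 𝕜) (v : ι₂ → 𝕜) (w : ι₃ → 𝕜) : EuclideanSpace 𝕜 (ι₁ × ι₂ × ι₃) :=
  WithLp.toLp 2 fun x => u x.1 * v x.2.1 * w x.2.2

theorem continuous_rankOneTensor :
    Continuous fun p : (ι₁ → 𝕜) × (ι₂ → 𝕜) × (ι₃ → 𝕜) => rankOneTensor p.1 p.2.1 p.2.2 :=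
  (PiLp.continuous_toLp 2 _).comp (by fun_prop)

theorem rankOneTensor_mem_rankOneTensors (u : ι₁ → 𝕜) (v : ι₂ → 𝕜) (w : ι₃ → 𝕜) :
    rankOneTensor u v w ∈ rankOneTensors 𝕜 ι₁ ι₂ ι₃ :=
  ⟨u, v, w, fun _ _ _ => rfl⟩

theorem zero_mem_rankOneTensors : (0 : EuclideanSpace 𝕜 (ι₁ × ι₂ × ι₃)) ∈ rankOneTensors 𝕜 ι₁ ι₂ ι₃ :=
  ⟨0, 0, 0, fun _ _ _ => by simp⟩

variable [Fintype ι₁] [Fintype ι₂] [Fintype ι₃]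

theorem exists_factors_norm_le_of_norm_mul_le (u : ι₁ → 𝕜) (v : ι₂ → 𝕜) (w : ι₃ → 𝕜) {R : ℝ}
    (hR : 0 ≤ R) (h : ∀ i j k, ‖u i * v j * w k‖ ≤ R) :
    ∃ (u' : ι₁ → 𝕜) (v' : ι₂ → 𝕜) (w' : ι₃ → 𝕜), ‖u'‖ ≤ 1 ∧ ‖v'‖ ≤ 1 ∧ ‖w'‖ ≤ R ∧
      ∀ i j k, u' i * v' j * w' k = u i * v j * w k := by
  have hu : ∀ j k, ‖u‖ * ‖v j‖ * ‖w k‖ ≤ R := fun j k =>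
    calc ‖u‖ * ‖v j‖ * ‖w k‖ = ‖(v j * w k) • u‖ := by rw [norm_smul, norm_mul]; ring
      _ ≤ R := (pi_norm_le_iff_of_nonneg hR).2 fun i => by
        simpa only [Pi.smul_apply, smul_eq_mul, norm_mul, mul_comm, mul_left_comm] using h i j k
  have huv : ∀ k, ‖u‖ * ‖v‖ * ‖w k‖ ≤ R := fun k =>
    calc ‖u‖ * ‖v‖ * ‖w k‖ = ‖((‖u‖ : 𝕜) * w k) • v‖ := by
          rw [norm_smul, norm_mul, RCLike.norm_ofReal, abs_norm]; ring
      _ ≤ R := (pi_norm_le_iff_of_nonneg hR).2 fun j => by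
        simpa only [Pi.smul_apply, smul_eq_mul, norm_mul, RCLike.norm_ofReal, abs_norm, mul_comm,
          mul_left_comm] using hu j k
  refine ⟨(‖u‖⁻¹ : 𝕜) • u, (‖v‖⁻¹ : 𝕜) • v, ((‖u‖ * ‖v‖ : ℝ) : 𝕜) • w, ?_, ?_, ?_, fun i j k => ?_⟩
  · rw [norm_smul, norm_inv, RCLike.norm_ofReal, abs_norm]
    exact inv_mul_le_one
  · rw [norm_smul, norm_inv, RCLike.norm_ofReal, abs_norm]
    exact inv_mul_le_one
  · refine (pi_norm_le_iff_of_nonneg hR).2 fun k => ?_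
    simpa [norm_mul, mul_assoc] using huv k
  · rcases eq_or_ne u 0 with rfl | hu0
    · simp
    rcases eq_or_ne v 0 with rfl | hv0
    · simp
    simp only [Pi.smul_apply, smul_eq_mul]
    have : (‖u‖ : 𝕜) ≠ 0 := by simpa using hu0
    have : (‖v‖ : 𝕜) ≠ 0 := by simpa using hv0
    push_cast
    field_simp

theorem rankOneTensors_inter_closedBall_subset {R : ℝ} (hR : 0 ≤ R) :
    rankOneTensors 𝕜 ι₁ ι₂ ι₃ ∩ closedBall 0 R ⊆
      (fun p => rankOneTensor p.1 p.2.1 p.2.2) '' (closedBall 0 1 ×ˢ closedBall 0 1 ×ˢ closedBall 0 R) := by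
  rintro Y ⟨⟨u, v, w, hY⟩, hYR⟩
  obtain ⟨u', v', w', hu', hv', hw', huvw⟩ := exists_factors_norm_le_of_norm_mul_le u v w hR
    fun i j k => hY i j k ▸ (PiLp.norm_apply_le Y _).trans (mem_closedBall_zero_iff.1 hYR)
  refine ⟨(u', v', w'), ⟨by simpa, by simpa, by simpa⟩, ?_⟩
  ext ⟨i, j, k⟩
  simp [rankOneTensor, hY, huvw]

theorem exists_isMinOn_dist_rankOneTensors (T : EuclideanSpace 𝕜 (ι₁ × ι₂ × ι₃)) :
    ∃ X ∈ rankOneTensors 𝕜 ι₁ ι₂ ι₃, IsMinOn (dist T) (rankOneTensors 𝕜 ι₁ ι₂ ι₃) X := by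
  refine exists_isMinOn_dist_of_isCompact T zero_mem_rankOneTensors
    (((isCompact_closedBall 0 1).prod ((isCompact_closedBall 0 1).prod
      (isCompact_closedBall 0 (2 * ‖T‖)))).image continuous_rankOneTensor) ?_ ?_
  · refine (Set.inter_subset_inter_right _ (closedBall_subset_closedBall' ?_)).trans
      (rankOneTensors_inter_closedBall_subset (by positivity))
    simp [two_mul]
  · rintro _ ⟨p, -, rfl⟩
    exact rankOneTensor_mem_rankOneTensors _ _ _

end RankOne

/-- Best rank-one approximation always exists: for any `T ∈ 𝕜^{m₁×m₂×m₃}` there is a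
rank-at-most-1 tensor `X*` with `‖T - X*‖ = inf {‖T - X‖ : X of rank ≤ 1}`,
with respect to the Hilbert–Schmidt norm. -/
theorem best_rank_one_approximation_exists (𝕜 : Type*) [RCLike 𝕜] (m₁ m₂ m₃ : ℕ)
    (T : EuclideanSpace 𝕜 (Fin m₁ × Fin m₂ × Fin m₃)) :
    ∃ X : EuclideanSpace 𝕜 (Fin m₁ × Fin m₂ × Fin m₃),
      (∃ (u : Fin m₁ → 𝕜) (v : Fin m₂ → 𝕜) (w : Fin m₃ → 𝕜),
        ∀ i j k, X (i, j, k) = u i * v j * w k) ∧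
      ‖T - X‖ = ⨅ Y : {Y : EuclideanSpace 𝕜 (Fin m₁ × Fin m₂ × Fin m₃) |
          ∃ (u : Fin m₁ → 𝕜) (v : Fin m₂ → 𝕜) (w : Fin m₃ → 𝕜),
            ∀ i j k, Y (i, j, k) = u i * v j * w k}, ‖T - (Y : EuclideanSpace 𝕜 (Fin m₁ × Fin m₂ × Fin m₃))‖ := by
  obtain ⟨X, hX, hmin⟩ := exists_isMinOn_dist_rankOneTensors T
  refine ⟨X, hX, ?_⟩
  simp only [← dist_eq_norm]
  exact (hmin.iInf_eq hX).symm
end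

section
/- Let B ∈ ℝ^{m×m} be symmetric and define g_B on the Stiefel manifold Fr(i,ℝ^m) of orthonormal i-frames by g_B(x_1,…,x_i) = Σ_{l=1}^i x_l^⊤ B x_l. Then (x_1,…,x_i) is a critical point of g_B if and only if span(x_1,…,x_i) contains i linearly independent eigenvectors of B, i.e., span(x_1,…,x_i) is an invariant subspace of B. -/
open Matrix
/-- An orthonormal `i`-frame in `ℝ^m` (a point of the Stiefel manifold `Fr(i,ℝ^m)`). -/
def IsOrthonormalFrame {m i : ℕ} (x : Fin i → Fin m → ℝ) : Prop :=
  ∀ s t, x s ⬝ᵥ x t = if s = t then (1 : ℝ) else 0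

/-- `x` is a critical point of `f` on the Stiefel manifold `Fr(i,ℝ^m)`: along every
differentiable curve of orthonormal frames through `x`, the derivative of `f` vanishes. -/
def StiefelCritical {m i : ℕ} (f : (Fin i → Fin m → ℝ) → ℝ) (x : Fin i → Fin m → ℝ) : Prop :=
  ∀ c : ℝ → (Fin i → Fin m → ℝ),
    (∀ l j, Differentiable ℝ fun t => c t l j) →
    c 0 = x → (∀ t, IsOrthonormalFrame (c t)) →
    deriv (fun t => f (c t)) 0 = 0

/-!
Along a curve of orthonormal frames through `x` with velocity `v`, the derivative of `g_B` is
`2 ∑_l (B x_l)ᵀ v_l`, and differentiating the Gram matrix shows that `x_sᵀ v_l` is antisymmetric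
in `(s, l)`. If `span x` is `B`-invariant, then `B x_l = ∑_s d_{ls} x_s` with `d_{ls} = x_sᵀ B x_l`
symmetric, so the derivative pairs a symmetric with an antisymmetric matrix and vanishes.
Conversely, rotating `x_l` towards a unit vector `u ⊥ span x` has derivative `2 (B x_l)ᵀ u`, so at
a critical point `B x_l ⊥ (span x)ᗮ`, i.e. `span x` is invariant. Finally, an invariant subspace
of dimension `i` carries an eigenbasis of the symmetric restriction of `B`, and `i` independent
eigenvectors in an `i`-dimensional subspace span it, which makes it invariant.
-/


theorem Matrix.IsSymm.mulVec_dotProduct {n : Type*} [Fintype n] {B : Matrix n n ℝ}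
    (hB : B.IsSymm) (u v : n → ℝ) : B *ᵥ u ⬝ᵥ v = u ⬝ᵥ B *ᵥ v := by
  rw [dotProduct_comm, dotProduct_mulVec, ← mulVec_transpose, hB.eq, dotProduct_comm]

section Calculus

variable {n : Type*} [Fintype n] {f g : ℝ → n → ℝ} {f' g' : n → ℝ} {t : ℝ}

theorem HasDerivAt.dotProduct (hf : HasDerivAt f f' t) (hg : HasDerivAt g g' t) :
    HasDerivAt (fun s => f s ⬝ᵥ g s) (f' ⬝ᵥ g t + f t ⬝ᵥ g') t := by
  rw [hasDerivAt_pi] at hf hg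
  unfold _root_.dotProduct
  rw [← Finset.sum_add_distrib]
  exact HasDerivAt.fun_sum fun j _ => (hf j).mul (hg j)

theorem HasDerivAt.mulVec {p : Type*} (A : Matrix p n ℝ) (hf : HasDerivAt f f' t) :
    HasDerivAt (fun s => A *ᵥ f s) (A *ᵥ f') t := by
  rw [hasDerivAt_pi] at hf ⊢
  intro k
  simp only [Matrix.mulVec, _root_.dotProduct]
  exact HasDerivAt.fun_sum fun j _ => (hf j).const_mul (A k j)

theorem HasDerivAt.dotProduct_mulVec_self {B : Matrix n n ℝ} (hB : B.IsSymm)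
    (hf : HasDerivAt f f' t) :
    HasDerivAt (fun s => f s ⬝ᵥ B *ᵥ f s) (2 * (B *ᵥ f t ⬝ᵥ f')) t := by
  convert hf.dotProduct (hf.mulVec B) using 1
  rw [two_mul, dotProduct_comm f', ← hB.mulVec_dotProduct]

theorem hasDerivAt_sum_dotProduct_mulVec_self {ι : Type*} [Fintype ι] {B : Matrix n n ℝ}
    (hB : B.IsSymm) {c : ℝ → ι → n → ℝ} {v : ι → n → ℝ} (hc : HasDerivAt c v t) :
    HasDerivAt (fun s => ∑ l, c s l ⬝ᵥ B *ᵥ c s l) (2 * ∑ l, B *ᵥ c t l ⬝ᵥ v l) t := by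
  rw [Finset.mul_sum]
  exact HasDerivAt.fun_sum fun l _ => (hasDerivAt_pi.mp hc l).dotProduct_mulVec_self hB

end Calculus

theorem Finset.sum_sum_mul_eq_zero_of_symm_of_antisymm {ι R : Type*} [Fintype ι] [CommRing R]
    [NoZeroDivisors R] [CharZero R] {a b : ι → ι → R} (ha : ∀ k l, a k l = a l k)
    (hb : ∀ k l, b k l = -b l k) : ∑ k, ∑ l, a k l * b k l = 0 := by
  rw [← self_eq_neg]
  calc ∑ k, ∑ l, a k l * b k l = ∑ l, ∑ k, a k l * b k l := Finset.sum_comm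
    _ = -∑ k, ∑ l, a k l * b k l := by
      simp only [← Finset.sum_neg_distrib]
      refine Finset.sum_congr rfl fun l _ => Finset.sum_congr rfl fun k _ => ?_
      rw [ha, hb, mul_neg]

theorem Submodule.apply_mem_span_of_forall_apply_mem {R M : Type*} [Semiring R] [AddCommMonoid M]
    [Module R M] {f : M →ₗ[R] M} {s : Set M} (h : ∀ v ∈ s, f v ∈ span R s) {v : M}
    (hv : v ∈ span R s) : f v ∈ span R s :=
  (span_le (p := (span R s).comap f)).mpr h hv

theorem Submodule.apply_mem_of_linearIndependent_eigenvectors {K M ι : Type*} [Field K]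
    [AddCommGroup M] [Module K M] [Fintype ι] {f : M →ₗ[K] M} {V : Submodule K M}
    [FiniteDimensional K V] {w : ι → M} (hli : LinearIndependent K w)
    (heig : ∀ l, ∃ μ : K, f (w l) = μ • w l) (hw : ∀ l, w l ∈ V)
    (hV : Module.finrank K V ≤ Fintype.card ι) {v : M} (hv : v ∈ V) : f v ∈ V := by
  have hspan : span K (Set.range w) = V :=
    eq_of_le_of_finrank_le (span_le.mpr (Set.range_subset_iff.mpr hw))
      (by rwa [finrank_span_eq_card hli])
  rw [← hspan] at hv ⊢
  refine apply_mem_span_of_forall_apply_mem ?_ hv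
  rintro _ ⟨l, rfl⟩
  obtain ⟨μ, hμ⟩ := heig l
  rw [hμ]
  exact smul_mem _ μ (subset_span ⟨l, rfl⟩)

theorem LinearMap.IsSymmetric.exists_linearIndependent_eigenvectors_of_mapsTo {𝕜 E : Type*}
    [RCLike 𝕜] [NormedAddCommGroup E] [InnerProductSpace 𝕜 E] {T : E →ₗ[𝕜] E}
    (hT : T.IsSymmetric) {V : Submodule 𝕜 E} [FiniteDimensional 𝕜 V] (hV : ∀ v ∈ V, T v ∈ V)
    {n : ℕ} (hn : Module.finrank 𝕜 V = n) :
    ∃ w : Fin n → E, LinearIndependent 𝕜 w ∧ (∀ l, ∃ μ : 𝕜, T (w l) = μ • w l) ∧ ∀ l, w l ∈ V := by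
  have hS := hT.restrict_invariant hV
  refine ⟨fun l => hS.eigenvectorBasis hn l, ?_, fun l => ⟨hS.eigenvalues hn l, ?_⟩,
    fun l => (hS.eigenvectorBasis hn l).2⟩
  · exact (hS.eigenvectorBasis hn).toBasis.linearIndependent.map' V.subtype V.ker_subtype
  · exact congrArg Subtype.val (hS.apply_eigenvectorBasis hn l)

theorem Matrix.IsSymm.exists_linearIndependent_eigenvectors_of_mapsTo {n : Type*} [Fintype n]
    [DecidableEq n] {B : Matrix n n ℝ} (hB : B.IsSymm) {W : Submodule ℝ (n → ℝ)}
    (hW : ∀ v ∈ W, B *ᵥ v ∈ W) {k : ℕ} (hk : Module.finrank ℝ W = k) :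
    ∃ w : Fin k → n → ℝ, LinearIndependent ℝ w ∧ (∀ l, ∃ μ : ℝ, B *ᵥ w l = μ • w l) ∧
      ∀ l, w l ∈ W := by
  let e := WithLp.linearEquiv 2 ℝ (n → ℝ)
  have hT : (toEuclideanLin B).IsSymmetric :=
    isSymmetric_toEuclideanLin_iff.mpr (isHermitian_iff_isSymm.mpr hB)
  obtain ⟨w, hli, heig, hw⟩ :=
    hT.exists_linearIndependent_eigenvectors_of_mapsTo (V := W.comap e.toLinearMap)
      (fun v hv => hW _ hv)
      (by rw [Submodule.comap_equiv_eq_map_symm, LinearEquiv.finrank_map_eq, hk])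
  refine ⟨e ∘ w, hli.map' e.toLinearMap e.ker, fun l => ?_, hw⟩
  obtain ⟨μ, hμ⟩ := heig l
  exact ⟨μ, congrArg e hμ⟩

variable {m i : ℕ}

namespace IsOrthonormalFrame

variable {x : Fin i → Fin m → ℝ}

theorem dotProduct_sum_smul (hx : IsOrthonormalFrame x) (c : Fin i → ℝ) (l : Fin i) :
    x l ⬝ᵥ ∑ s, c s • x s = c l := by
  simp [dotProduct_sum, dotProduct_smul, hx l]

theorem linearIndependent (hx : IsOrthonormalFrame x) : LinearIndependent ℝ x :=
  Fintype.linearIndependent_iff.mpr fun c hc l => by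
    simpa [hc] using (hx.dotProduct_sum_smul c l).symm

theorem finrank_span (hx : IsOrthonormalFrame x) :
    Module.finrank ℝ (Submodule.span ℝ (Set.range x)) = i := by
  rw [finrank_span_eq_card hx.linearIndependent, Fintype.card_fin]

theorem eq_sum_dotProduct_smul (hx : IsOrthonormalFrame x) {v : Fin m → ℝ}
    (hv : v ∈ Submodule.span ℝ (Set.range x)) : v = ∑ s, (x s ⬝ᵥ v) • x s := by
  obtain ⟨a, rfl⟩ := Submodule.mem_span_range_iff_exists_fun ℝ |>.mp hv
  simp_rw [hx.dotProduct_sum_smul]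

theorem mem_span_of_forall_dotProduct_eq_zero (hx : IsOrthonormalFrame x) {v : Fin m → ℝ}
    (h : ∀ u, (∀ s, x s ⬝ᵥ u = 0) → v ⬝ᵥ u = 0) : v ∈ Submodule.span ℝ (Set.range x) := by
  set r := v - ∑ s, (x s ⬝ᵥ v) • x s
  have hr : ∀ s, x s ⬝ᵥ r = 0 := fun s => by
    rw [dotProduct_sub, hx.dotProduct_sum_smul, sub_self]
  have hrr : r ⬝ᵥ r = 0 := calc
    r ⬝ᵥ r = r ⬝ᵥ v - ∑ s, (x s ⬝ᵥ v) * (r ⬝ᵥ x s) := by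
      simp only [r, dotProduct_sub r, dotProduct_sum, dotProduct_smul, smul_eq_mul]
    _ = 0 := by simp [dotProduct_comm r, hr, h r hr]
  rw [sub_eq_zero.mp (dotProduct_self_eq_zero.mp hrr)]
  exact Submodule.sum_mem _ fun s _ => Submodule.smul_mem _ _ (Submodule.subset_span ⟨s, rfl⟩)

end IsOrthonormalFrame

theorem dotProduct_add_dotProduct_eq_zero_of_isOrthonormalFrame {c : ℝ → Fin i → Fin m → ℝ}
    {v : Fin i → Fin m → ℝ} {t : ℝ} (hc : ∀ t, IsOrthonormalFrame (c t)) (hv : HasDerivAt c v t)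
    (s a : Fin i) : v s ⬝ᵥ c t a + c t s ⬝ᵥ v a = 0 := by
  have hgram : HasDerivAt (fun t => c t s ⬝ᵥ c t a) 0 t := by
    simp only [hc _ s a]
    exact hasDerivAt_const t _
  exact ((hasDerivAt_pi.mp hv s).dotProduct (hasDerivAt_pi.mp hv a)).unique hgram

noncomputable def rotateFrame (x : Fin i → Fin m → ℝ) (l : Fin i) (u : Fin m → ℝ) (t : ℝ) :
    Fin i → Fin m → ℝ :=
  Function.update x l (Real.cos t • x l + Real.sin t • u)

section rotateFrame

variable {x : Fin i → Fin m → ℝ} {l : Fin i} {u : Fin m → ℝ}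

@[simp]
theorem rotateFrame_zero : rotateFrame x l u 0 = x := by
  simp [rotateFrame]

theorem hasDerivAt_rotateFrame (t : ℝ) :
    HasDerivAt (rotateFrame x l u) (Pi.single l (-Real.sin t • x l + Real.cos t • u)) t := by
  rw [hasDerivAt_pi]
  intro s
  by_cases hs : s = l
  · subst hs
    simpa [rotateFrame] using
      ((Real.hasDerivAt_cos t).smul_const (x s)).fun_add ((Real.hasDerivAt_sin t).smul_const u)
  · simpa [rotateFrame, hs] using hasDerivAt_const t (x s)

theorem IsOrthonormalFrame.rotateFrame (hx : IsOrthonormalFrame x) (hu : u ⬝ᵥ u = 1)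
    (hxu : ∀ s, x s ⬝ᵥ u = 0) (t : ℝ) : IsOrthonormalFrame (rotateFrame x l u t) := by
  have hux : ∀ s, u ⬝ᵥ x s = 0 := fun s => by rw [dotProduct_comm, hxu]
  intro s a
  by_cases hs : s = l <;> by_cases ha : a = l
  · subst hs ha
    simp [_root_.rotateFrame, add_dotProduct, dotProduct_add, hx _ _, hu, hxu, hux]
    nlinarith [Real.sin_sq_add_cos_sq t]
  · subst hs
    simp [_root_.rotateFrame, ha, add_dotProduct, hx s a, Ne.symm ha, hux]
  · subst ha
    simp [_root_.rotateFrame, hs, dotProduct_add, hx s a, hxu]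
  · simp [_root_.rotateFrame, hs, ha, hx s a]

end rotateFrame

section Criticality

variable {B : Matrix (Fin m) (Fin m) ℝ} {x : Fin i → Fin m → ℝ}

theorem StiefelCritical.mulVec_dotProduct_eq_zero (hB : B.IsSymm) (hx : IsOrthonormalFrame x)
    (hcrit : StiefelCritical (fun y => ∑ l, y l ⬝ᵥ B *ᵥ y l) x) (l : Fin i) {u : Fin m → ℝ}
    (hxu : ∀ s, x s ⬝ᵥ u = 0) : B *ᵥ x l ⬝ᵥ u = 0 := by
  rcases eq_or_ne u 0 with rfl | hu
  · exact dotProduct_zero _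
  set r := √(u ⬝ᵥ u)
  have hr : r * r = u ⬝ᵥ u := Real.mul_self_sqrt (by simpa using dotProduct_self_star_nonneg u)
  have hr0 : r ≠ 0 := by
    intro h
    rw [h, zero_mul, eq_comm, dotProduct_self_eq_zero] at hr
    exact hu hr
  set e := r⁻¹ • u
  have he : e ⬝ᵥ e = 1 := by
    simp only [e, smul_dotProduct, dotProduct_smul, smul_eq_mul, ← hr]
    field_simp
  have hxe : ∀ s, x s ⬝ᵥ e = 0 := fun s => by simp [e, dotProduct_smul, hxu s]
  have hdiff : ∀ s j, Differentiable ℝ fun t => rotateFrame x l e t s j := fun s j t =>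
    (hasDerivAt_pi.mp (hasDerivAt_pi.mp (hasDerivAt_rotateFrame t) s) j).differentiableAt
  have hderiv := hcrit (rotateFrame x l e) hdiff rotateFrame_zero (hx.rotateFrame he hxe)
  rw [(hasDerivAt_sum_dotProduct_mulVec_self hB (hasDerivAt_rotateFrame 0)).deriv,
    Fintype.sum_eq_single l fun s hs => by simp [hs]] at hderiv
  have hBe : B *ᵥ x l ⬝ᵥ e = 0 := by simpa using hderiv
  rw [show u = r • e by simp [e, smul_smul, hr0], dotProduct_smul, hBe, smul_zero]

theorem StiefelCritical.mulVec_mem_span (hB : B.IsSymm) (hx : IsOrthonormalFrame x)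
    (hcrit : StiefelCritical (fun y => ∑ l, y l ⬝ᵥ B *ᵥ y l) x) (l : Fin i) :
    B *ᵥ x l ∈ Submodule.span ℝ (Set.range x) :=
  hx.mem_span_of_forall_dotProduct_eq_zero fun _ hxu => hcrit.mulVec_dotProduct_eq_zero hB hx l hxu

theorem stiefelCritical_of_mulVec_mem_span (hB : B.IsSymm) (hx : IsOrthonormalFrame x)
    (hinv : ∀ l, B *ᵥ x l ∈ Submodule.span ℝ (Set.range x)) :
    StiefelCritical (fun y => ∑ l, y l ⬝ᵥ B *ᵥ y l) x := by
  intro c hdiff hc0 hc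
  set v : Fin i → Fin m → ℝ := fun l j => deriv (fun t => c t l j) 0
  have hv : HasDerivAt c v 0 :=
    hasDerivAt_pi.mpr fun l => hasDerivAt_pi.mpr fun j => (hdiff l j 0).hasDerivAt
  have htangent := dotProduct_add_dotProduct_eq_zero_of_isOrthonormalFrame hc hv
  rw [hc0] at htangent
  rw [(hasDerivAt_sum_dotProduct_mulVec_self hB hv).deriv, hc0, mul_eq_zero,
    or_iff_right two_ne_zero]
  calc ∑ l, B *ᵥ x l ⬝ᵥ v l = ∑ l, ∑ s, (x s ⬝ᵥ B *ᵥ x l) * (x s ⬝ᵥ v l) := by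
        refine Finset.sum_congr rfl fun l _ => ?_
        conv_lhs => rw [hx.eq_sum_dotProduct_smul (hinv l)]
        simp [sum_dotProduct, smul_dotProduct]
    _ = 0 := by
        refine Finset.sum_sum_mul_eq_zero_of_symm_of_antisymm (fun l s => ?_) (fun l s => ?_)
        · rw [dotProduct_comm, hB.mulVec_dotProduct]
        · linarith [htangent l s, dotProduct_comm (v l) (x s)]

end Criticality

/-- For a symmetric matrix `B`, the orthonormal frame `(x₁,…,x_i)` is a critical point of
`g_B(x₁,…,x_i) = Σ_l x_lᵀ B x_l` on the Stiefel manifold iff `span(x₁,…,x_i)` contains `i`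
linearly independent eigenvectors of `B`. -/
theorem stiefel_critical_iff_eigenvectors (m i : ℕ)
    (B : Matrix (Fin m) (Fin m) ℝ) (hB : B.IsSymm)
    (x : Fin i → Fin m → ℝ) (hx : IsOrthonormalFrame x) :
    StiefelCritical (fun y => ∑ l, y l ⬝ᵥ B.mulVec (y l)) x ↔
      ∃ w : Fin i → (Fin m → ℝ),
        LinearIndependent ℝ w ∧
        (∀ l, ∃ μ : ℝ, B.mulVec (w l) = μ • w l) ∧
        (∀ l, w l ∈ Submodule.span ℝ (Set.range x)) := by
  constructor
  · intro hcrit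
    refine hB.exists_linearIndependent_eigenvectors_of_mapsTo
      (fun _ => Submodule.apply_mem_span_of_forall_apply_mem (f := B.mulVecLin) ?_) hx.finrank_span
    rintro _ ⟨l, rfl⟩
    exact hcrit.mulVec_mem_span hB hx l
  · rintro ⟨w, hli, heig, hw⟩
    refine stiefelCritical_of_mulVec_mem_span hB hx fun l => ?_
    exact Submodule.apply_mem_of_linearIndependent_eigenvectors (f := B.mulVecLin) hli heig hw
      (by rw [hx.finrank_span, Fintype.card_fin]) (Submodule.subset_span ⟨l, rfl⟩)
end

section
/- In the relaxation algorithm where, given subspaces (X_i, Y_i, Z_i), one successively replaces X_{i+1} by the span of the p top left singular vectors of τ(Y_i,Z_i), Y_{i+1} by the span of the q top left singular vectors of τ(X_{i+1},Z_i), and Z_{i+1} by the span of the r top left singular vectors of τ(X_{i+1},Y_{i+1}), the objective ‖P_{X⊗Y⊗Z}(τ)‖² is monotonically non-decreasing along the iterates: ‖P_{X_i⊗Y_i⊗Z_i}(τ)‖² ≤ ‖P_{X_{i+1}⊗Y_i⊗Z_i}(τ)‖² ≤ ‖P_{X_{i+1}⊗Y_{i+1}⊗Z_i}(τ)‖² ≤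 ‖P_{X_{i+1}⊗Y_{i+1}⊗Z_{i+1}}(τ)‖². -/
/-! With two of the frames fixed, the objective is the trace `∑ₗ ⟪xₗ, M xₗ⟫` of `M = A Aᵀ`
over the remaining frame, `A` being the unfolding of `τ` along that mode. As the objective is
symmetric in the three modes, each step of the sweep is an instance of one fact: an orthonormal
eigenframe `e` of a symmetric `M` whose eigenvalues dominate the Rayleigh quotient on its
orthogonal complement maximizes this trace. Splitting `v` into its component in `span e`
(which `M` preserves) and the orthogonal rest gives
`⟪v, M v⟫ ≤ μ₀ ‖v‖² + ∑ⱼ (μⱼ - μ₀) ⟪eⱼ, v⟫²` with `μ₀ = min μ`; summing over an orthonormal frame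
and applying Bessel's inequality `∑ₗ ⟪xₗ, eⱼ⟫² ≤ 1` bounds the trace by `∑ⱼ μⱼ`. -/

open Matrix

/-- `‖P_{X⊗Y⊗Z}(τ)‖²` expressed through orthonormal frames `x, y, z` of `X, Y, Z`. -/
def projNormSq3 {m₁ m₂ m₃ p q r : ℕ} (τ : Fin m₁ → Fin m₂ → Fin m₃ → ℝ)
    (x : Fin p → Fin m₁ → ℝ) (y : Fin q → Fin m₂ → ℝ) (z : Fin r → Fin m₃ → ℝ) : ℝ :=
  ∑ l, ∑ m, ∑ n, (∑ i, ∑ j, ∑ k, τ i j k * x l i * y m j * z n k) ^ 2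

/-- The unfolding matrix of `τ(Y,Z) : ℝ^{m₁} → Y ⊗ Z` in the frames `y, z`. -/
def unfold1 {m₁ m₂ m₃ q r : ℕ} (τ : Fin m₁ → Fin m₂ → Fin m₃ → ℝ)
    (y : Fin q → Fin m₂ → ℝ) (z : Fin r → Fin m₃ → ℝ) :
    Matrix (Fin m₁) (Fin q × Fin r) ℝ :=
  Matrix.of fun i mn => ∑ j, ∑ k, τ i j k * y mn.1 j * z mn.2 k

/-- `x'` is a frame of top-`p` left singular vectors of the operator with unfolding
matrix `A`: the `x' l` are eigenvectors of `A Aᵀ` with eigenvalues `μ l`, and the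
Rayleigh quotient of `A Aᵀ` on the orthogonal complement of the frame is at most
`min_l μ l`. -/
def IsTopSingularFrame {m p : ℕ} {n : Type*} [Fintype n] (A : Matrix (Fin m) n ℝ)
    (x' : Fin p → Fin m → ℝ) (μ : Fin p → ℝ) : Prop :=
  IsOrthonormalFrame x' ∧
  (∀ l, (A * Aᵀ).mulVec (x' l) = μ l • x' l) ∧
  (∀ v : Fin m → ℝ, (∀ l, v ⬝ᵥ x' l = 0) →
    v ⬝ᵥ (A * Aᵀ).mulVec v ≤ (⨅ l, μ l) * (v ⬝ᵥ v))

open scoped InnerProductSpace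

section Eigenframe

variable {E : Type*} [NormedAddCommGroup E] [InnerProductSpace ℝ E] {ι : Type*} [Fintype ι]
  {T : E →ₗ[ℝ] E} {e : ι → E} {μ : ι → ℝ} {μ₀ : ℝ}

theorem LinearMap.IsSymmetric.inner_map_self_le_of_eigenframe (hT : T.IsSymmetric)
    (he : Orthonormal ℝ e) (heig : ∀ j, T (e j) = μ j • e j)
    (hres : ∀ w, (∀ j, ⟪w, e j⟫_ℝ = 0) → ⟪w, T w⟫_ℝ ≤ μ₀ * ‖w‖ ^ 2) (v : E) :
    ⟪v, T v⟫_ℝ ≤ μ₀ * ‖v‖ ^ 2 + ∑ j, (μ j - μ₀) * ⟪e j, v⟫_ℝ ^ 2 := by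
  set c := fun j => ⟪e j, v⟫_ℝ
  set u := ∑ j, c j • e j
  set w := v - u
  have hw : ∀ j, ⟪w, e j⟫_ℝ = 0 := fun j => by
    simp [w, u, inner_sub_left, he.inner_left_fintype, c, real_inner_comm]
  have hw' : ∀ j, ⟪e j, w⟫_ℝ = 0 := fun j => by rw [real_inner_comm, hw]
  have huw : ⟪u, w⟫_ℝ = 0 := by simp [u, sum_inner, inner_smul_left, hw']
  have hTu : T u = ∑ j, (μ j * c j) • e j := by
    simp [u, map_sum, heig, smul_smul, mul_comm]
  have hTuw : ⟪T u, w⟫_ℝ = 0 := by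
    simp [hTu, sum_inner, inner_smul_left, hw']
  have huTu : ⟪u, T u⟫_ℝ = ∑ j, μ j * c j ^ 2 := by
    rw [hTu, he.inner_sum]
    exact Finset.sum_congr rfl fun j _ => by simp only [conj_trivial]; ring
  have hw_sq : ‖w‖ ^ 2 = ‖v‖ ^ 2 - ∑ j, c j ^ 2 := by
    have hu_sq : ‖u‖ ^ 2 = ∑ j, c j ^ 2 := by
      rw [← real_inner_self_eq_norm_sq, he.inner_sum]
      simp [sq]
    have := norm_add_sq_eq_norm_sq_add_norm_sq_real huw
    rw [add_sub_cancel] at this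
    linarith
  have hvTv : ⟪v, T v⟫_ℝ = ⟪u, T u⟫_ℝ + ⟪w, T w⟫_ℝ := by
    have hv : v = u + w := (add_sub_cancel u v).symm
    rw [hv, map_add, inner_add_left, inner_add_right, inner_add_right, ← hT u w,
      real_inner_comm (T u) w, hTuw]
    ring
  calc ⟪v, T v⟫_ℝ = ∑ j, μ j * c j ^ 2 + ⟪w, T w⟫_ℝ := by rw [hvTv, huTu]
    _ ≤ ∑ j, μ j * c j ^ 2 + μ₀ * (‖v‖ ^ 2 - ∑ j, c j ^ 2) := by
      rw [← hw_sq]; exact add_le_add_right (hres w hw) _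
    _ = μ₀ * ‖v‖ ^ 2 + ∑ j, (μ j - μ₀) * c j ^ 2 := by
      simp only [sub_mul, Finset.sum_sub_distrib, ← Finset.mul_sum]; ring

theorem LinearMap.IsSymmetric.sum_inner_map_self_le_of_eigenframe (hT : T.IsSymmetric)
    (he : Orthonormal ℝ e) (heig : ∀ j, T (e j) = μ j • e j) (hμ₀ : ∀ j, μ₀ ≤ μ j)
    (hres : ∀ w, (∀ j, ⟪w, e j⟫_ℝ = 0) → ⟪w, T w⟫_ℝ ≤ μ₀ * ‖w‖ ^ 2)
    {x : ι → E} (hx : Orthonormal ℝ x) :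
    ∑ l, ⟪x l, T (x l)⟫_ℝ ≤ ∑ j, μ j := by
  have bessel : ∀ j, ∑ l, ⟪x l, e j⟫_ℝ ^ 2 ≤ 1 := fun j => by
    simpa [he.1 j] using hx.sum_inner_products_le (e j) (s := Finset.univ)
  calc ∑ l, ⟪x l, T (x l)⟫_ℝ
      ≤ ∑ l, (μ₀ * ‖x l‖ ^ 2 + ∑ j, (μ j - μ₀) * ⟪e j, x l⟫_ℝ ^ 2) :=
        Finset.sum_le_sum fun l _ => hT.inner_map_self_le_of_eigenframe he heig hres (x l)
    _ = ∑ j, (μ₀ + (μ j - μ₀) * ∑ l, ⟪x l, e j⟫_ℝ ^ 2) := by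
      simp only [hx.1, Finset.sum_add_distrib, Finset.mul_sum, real_inner_comm (e _)]
      rw [Finset.sum_comm]; simp
    _ ≤ ∑ j, (μ₀ + (μ j - μ₀) * 1) := by
      gcongr with j
      · exact sub_nonneg.2 (hμ₀ j)
      · exact bessel j
    _ = ∑ j, μ j := by simp

end Eigenframe

theorem EuclideanSpace.real_inner_eq_dotProduct {ι : Type*} [Fintype ι]
    (u v : EuclideanSpace ℝ ι) : ⟪u, v⟫_ℝ = u.ofLp ⬝ᵥ v.ofLp :=
  dotProduct_comm _ _

theorem IsOrthonormalFrame.orthonormal {m p : ℕ} {x : Fin p → Fin m → ℝ}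
    (hx : IsOrthonormalFrame x) :
    Orthonormal ℝ fun l => (WithLp.toLp 2 (x l) : EuclideanSpace ℝ (Fin m)) := by
  simp only [orthonormal_iff_ite, EuclideanSpace.real_inner_eq_dotProduct]
  exact hx

theorem IsTopSingularFrame.sum_dotProduct_mulVec_le {m p : ℕ} {n : Type*} [Fintype n]
    {A : Matrix (Fin m) n ℝ} {x x' : Fin p → Fin m → ℝ} {μ : Fin p → ℝ}
    (h : IsTopSingularFrame A x' μ) (hx : IsOrthonormalFrame x) :
    ∑ l, x l ⬝ᵥ (A * Aᵀ) *ᵥ x l ≤ ∑ l, x' l ⬝ᵥ (A * Aᵀ) *ᵥ x' l := by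
  obtain ⟨hx', heig, hres⟩ := h
  have hT : (A * Aᵀ).toEuclideanLin.IsSymmetric :=
    isSymmetric_toEuclideanLin_iff.mpr (by simpa using isHermitian_mul_conjTranspose_self A)
  have key := hT.sum_inner_map_self_le_of_eigenframe hx'.orthonormal
    (μ₀ := ⨅ l, μ l) (fun j => by simp [heig j])
    (fun j => ciInf_le (Set.finite_range μ).bddBelow j)
    (fun w hw => by
      simp only [EuclideanSpace.real_inner_eq_dotProduct, ← real_inner_self_eq_norm_sq] at hw ⊢
      exact hres w.ofLp hw) hx.orthonormal
  simp only [EuclideanSpace.real_inner_eq_dotProduct] at key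
  refine key.trans_eq (Finset.sum_congr rfl fun l _ => ?_)
  simp [heig l, hx' l l]

theorem dotProduct_mul_transpose_mulVec_self {m n R : Type*} [Fintype m] [Fintype n]
    [CommSemiring R] (A : Matrix m n R) (v : m → R) :
    v ⬝ᵥ (A * Aᵀ) *ᵥ v = (v ᵥ* A) ⬝ᵥ (v ᵥ* A) := by
  rw [← mulVec_mulVec, dotProduct_mulVec, mulVec_transpose]

section ProjNormSq3

variable {m₁ m₂ m₃ p q r : ℕ} (τ : Fin m₁ → Fin m₂ → Fin m₃ → ℝ)
  (x : Fin p → Fin m₁ → ℝ) (y : Fin q → Fin m₂ → ℝ) (z : Fin r → Fin m₃ → ℝ)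

theorem vecMul_unfold1_apply (v : Fin m₁ → ℝ) (mn : Fin q × Fin r) :
    (v ᵥ* unfold1 τ y z) mn = ∑ i, ∑ j, ∑ k, τ i j k * v i * y mn.1 j * z mn.2 k := by
  simp only [vecMul, dotProduct, unfold1, of_apply, Finset.mul_sum]
  exact Finset.sum_congr rfl fun i _ => Finset.sum_congr rfl fun j _ =>
    Finset.sum_congr rfl fun k _ => by ring

theorem projNormSq3_eq_sum_dotProduct_mulVec :
    projNormSq3 τ x y z = ∑ l, x l ⬝ᵥ (unfold1 τ y z * (unfold1 τ y z)ᵀ) *ᵥ x l := by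
  rw [projNormSq3]
  simp_rw [dotProduct_mul_transpose_mulVec_self]
  simp only [dotProduct, Fintype.sum_prod_type, vecMul_unfold1_apply, ← sq]

theorem projNormSq3_swap12 : projNormSq3 (fun j i k => τ i j k) y x z = projNormSq3 τ x y z := by
  unfold projNormSq3
  rw [Finset.sum_comm]
  refine Finset.sum_congr rfl fun l _ => Finset.sum_congr rfl fun m _ =>
    Finset.sum_congr rfl fun n _ => ?_
  rw [Finset.sum_comm]
  simp only [mul_right_comm _ (y _ _) (x _ _)]

theorem projNormSq3_swap23 : projNormSq3 (fun i k j => τ i j k) x z y = projNormSq3 τ x y z := by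
  unfold projNormSq3
  refine Finset.sum_congr rfl fun l _ => ?_
  rw [Finset.sum_comm]
  refine Finset.sum_congr rfl fun m _ => Finset.sum_congr rfl fun n _ => ?_
  simp only [mul_right_comm _ (z _ _) (y _ _)]
  congr 1
  exact Finset.sum_congr rfl fun i _ => Finset.sum_comm

theorem projNormSq3_rotate : projNormSq3 (fun k i j => τ i j k) z x y = projNormSq3 τ x y z :=
  (projNormSq3_swap12 (fun i k j => τ i j k) x z y).trans (projNormSq3_swap23 τ x y z)

end ProjNormSq3

/-- One sweep of the relaxation algorithm does not decrease the objective
`‖P_{X⊗Y⊗Z}(τ)‖²`: if `x'` spans the top `p` left singular vectors of `τ(Y,Z)`,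
`y'` those of `τ(X',Z)` and `z'` those of `τ(X',Y')`, then
`‖P_{X⊗Y⊗Z}τ‖² ≤ ‖P_{X'⊗Y⊗Z}τ‖² ≤ ‖P_{X'⊗Y'⊗Z}τ‖² ≤ ‖P_{X'⊗Y'⊗Z'}τ‖²`. -/
theorem relaxation_sweep_monotone (m₁ m₂ m₃ p q r : ℕ)
    (τ : Fin m₁ → Fin m₂ → Fin m₃ → ℝ)
    (x : Fin p → Fin m₁ → ℝ) (hx : IsOrthonormalFrame x)
    (y : Fin q → Fin m₂ → ℝ) (hy : IsOrthonormalFrame y)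
    (z : Fin r → Fin m₃ → ℝ) (hz : IsOrthonormalFrame z)
    (x' : Fin p → Fin m₁ → ℝ) (μ₁ : Fin p → ℝ)
    (hx' : IsTopSingularFrame (unfold1 τ y z) x' μ₁)
    (y' : Fin q → Fin m₂ → ℝ) (μ₂ : Fin q → ℝ)
    (hy' : IsTopSingularFrame (unfold1 (fun j i k => τ i j k) x' z) y' μ₂)
    (z' : Fin r → Fin m₃ → ℝ) (μ₃ : Fin r → ℝ)
    (hz' : IsTopSingularFrame (unfold1 (fun k i j => τ i j k) x' y') z' μ₃) :
    projNormSq3 τ x y z ≤ projNormSq3 τ x' y z ∧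
    projNormSq3 τ x' y z ≤ projNormSq3 τ x' y' z ∧
    projNormSq3 τ x' y' z ≤ projNormSq3 τ x' y' z' := by
  refine ⟨?_, ?_, ?_⟩
  · simpa only [projNormSq3_eq_sum_dotProduct_mulVec] using hx'.sum_dotProduct_mulVec_le hx
  · rw [← projNormSq3_swap12 τ x' y z, ← projNormSq3_swap12 τ x' y' z,
      projNormSq3_eq_sum_dotProduct_mulVec, projNormSq3_eq_sum_dotProduct_mulVec]
    exact hy'.sum_dotProduct_mulVec_le hy
  · rw [← projNormSq3_rotate τ x' y' z, ← projNormSq3_rotate τ x' y' z',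
      projNormSq3_eq_sum_dotProduct_mulVec, projNormSq3_eq_sum_dotProduct_mulVec]
    exact hz'.sum_dotProduct_mulVec_le hz
end
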